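/- The symplectic group Sp_{2r}(F) over a field F of characteristic 0 is generated by its Siegel parabolic subgroup P(F) = { block matrices [[A,B],[0,D]] in Sp_{2r}(F) } together with the single element w₁, where w₁ is the image of [[0,-1],[1,0]] under the standard embedding SL₂ ↪ Sp_{2r} into the first coordinate. -/

import Mathlib

open Matrix

/-!
Induct on the rank of the lower-left block `C` of `g = [[A, B], [C, D]]`, which does not change
under multiplication by the Siegel parabolic on either side. If `C ≠ 0`, parabolic factors
on both sides make the `i`-th column of `C` equal to `eᵢ` and `A i i = 0`. The symplectic relation
`Aᵀ C = Cᵀ A` then says that row `i` of `A` is a combination of the rows of `C` in which row `i`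
has coefficient `A i i = 0`. Multiplying by `w_i` replaces row `i` of `C` by row `i` of `A`, which
lies in the span of the other rows of `C` while row `i` of `C` does not, so the rank drops.
-/

theorem LinearEquiv.exists_apply_eq {K V : Type*} [Field K] [AddCommGroup V] [Module K V]
    {v w : V} (hv : v ≠ 0) (hw : w ≠ 0) : ∃ f : V ≃ₗ[K] V, f v = w := by
  obtain ⟨f, hf⟩ := Submodule.exists_linearEquiv_restrict_eq
    ((LinearEquiv.toSpanNonzeroSingleton K V v hv).symm ≪≫ₗ
      LinearEquiv.toSpanNonzeroSingleton K V w hw)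
  refine ⟨f, ?_⟩
  rw [← hf ⟨v, Submodule.mem_span_singleton_self v⟩, LinearEquiv.trans_apply,
    show (LinearEquiv.toSpanNonzeroSingleton K V v hv).symm ⟨v, _⟩ = 1 from
      LinearEquiv.coord_self K V v hv,
    LinearEquiv.toSpanNonzeroSingleton_one]

namespace Matrix

section Blocks

variable {l m n o p q R : Type*} [Fintype l] [Fintype m] [NonUnitalNonAssocSemiring R]

theorem toBlocks₁₁_mul (M : Matrix (n ⊕ o) (l ⊕ m) R) (N : Matrix (l ⊕ m) (p ⊕ q) R) :
    (M * N).toBlocks₁₁ = M.toBlocks₁₁ * N.toBlocks₁₁ + M.toBlocks₁₂ * N.toBlocks₂₁ := by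
  ext; simp [toBlocks₁₁, toBlocks₁₂, toBlocks₂₁, mul_apply, Fintype.sum_sum_type]

theorem toBlocks₂₁_mul (M : Matrix (n ⊕ o) (l ⊕ m) R) (N : Matrix (l ⊕ m) (p ⊕ q) R) :
    (M * N).toBlocks₂₁ = M.toBlocks₂₁ * N.toBlocks₁₁ + M.toBlocks₂₂ * N.toBlocks₂₁ := by
  ext; simp [toBlocks₂₁, toBlocks₂₂, toBlocks₁₁, mul_apply, Fintype.sum_sum_type]

end Blocks

theorem rank_mul_lt_of_mulVec_eq_zero {m n K : Type*} [Fintype m] [Fintype n] [Field K]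
    {M : Matrix m m K} {C : Matrix m n K} {v : n → K}
    (hv : C *ᵥ v ≠ 0) (hMv : M *ᵥ (C *ᵥ v) = 0) : (M * C).rank < C.rank := by
  set f := M.mulVecLin.domRestrict (LinearMap.range C.mulVecLin)
  have hrange : (M * C).rank = Module.finrank K (LinearMap.range f) := by
    rw [rank, mulVecLin_mul, LinearMap.range_comp, LinearMap.range_domRestrict]
  have hker : 0 < Module.finrank K (LinearMap.ker f) := by
    let x : LinearMap.range C.mulVecLin := ⟨C *ᵥ v, v, rfl⟩
    refine (Module.finrank_pos_iff_exists_ne_zero (R := K) (M := LinearMap.ker f)).2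
      ⟨⟨x, hMv⟩, ?_⟩
    simpa [x, ← Subtype.coe_inj] using hv
  have := LinearMap.finrank_range_add_finrank_ker f
  rw [hrange, rank]
  omega

variable {l R K : Type*} [Fintype l] [DecidableEq l] [CommRing R] [Field K]

theorem exists_unit_mulVec_single_eq (i : l) {v : l → K} (hv : v ≠ 0) :
    ∃ Z : GL l K, (Z : Matrix l l K) *ᵥ Pi.single i 1 = v := by
  obtain ⟨f, hf⟩ := LinearEquiv.exists_apply_eq (K := K) (Pi.single_ne_zero_iff.2 one_ne_zero) hv
  refine ⟨GeneralLinearGroup.toLin.symm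
    ((LinearMap.GeneralLinearGroup.generalLinearEquiv K (l → K)).symm f), ?_⟩
  rw [← hf]
  exact LinearMap.toMatrix'_mulVec _ _

theorem exists_transpose_inv_mul_mul_mulVec_single_eq {C : Matrix l l K} (hC : C ≠ 0) (i : l) :
    ∃ Y Z : GL l K,
      ((↑Y⁻¹ : Matrix l l K)ᵀ * C * (Z : Matrix l l K)) *ᵥ Pi.single i 1 = Pi.single i 1 := by
  obtain ⟨u, hu⟩ : ∃ u, C *ᵥ u ≠ 0 := by
    by_contra! h
    exact hC (ext_of_mulVec_single fun j => by rw [h, zero_mulVec])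
  obtain ⟨Z, hZ⟩ := exists_unit_mulVec_single_eq i
    (show u ≠ 0 by rintro rfl; simp at hu)
  obtain ⟨W, hW⟩ := exists_unit_mulVec_single_eq i hu
  set Y := ((isUnit_transpose _).2 W.isUnit).unit
  have hWY : (W : Matrix l l K) = (Y : Matrix l l K)ᵀ := by
    rw [IsUnit.unit_spec, transpose_transpose]
  refine ⟨Y, Z, ?_⟩
  rw [← mulVec_mulVec, ← mulVec_mulVec, hZ, ← hW, mulVec_mulVec, hWY, ← transpose_mul,
    Units.mul_inv, transpose_one, one_mulVec]

variable (l R) in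
def siegelParabolic : Submonoid (GL (l ⊕ l) R) where
  carrier := {p | (p : Matrix (l ⊕ l) (l ⊕ l) R) ∈ symplecticGroup l R ∧
    (p : Matrix (l ⊕ l) (l ⊕ l) R).toBlocks₂₁ = 0}
  mul_mem' {p q} hp hq := ⟨mul_mem hp.1 hq.1, by simp [toBlocks₂₁_mul, hp.2, hq.2]⟩
  one_mem' := ⟨one_mem _, rfl⟩

def siegelLevi (Y : GL l R) : GL (l ⊕ l) R where
  val := fromBlocks Y 0 0 (↑Y⁻¹)ᵀ
  inv := fromBlocks ↑Y⁻¹ 0 0 (↑Y)ᵀ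
  val_inv := by simp [fromBlocks_multiply, ← transpose_mul, fromBlocks_one]
  inv_val := by simp [fromBlocks_multiply, ← transpose_mul, fromBlocks_one]

def siegelUnipotent (S : Matrix l l R) : GL (l ⊕ l) R where
  val := fromBlocks 1 S 0 1
  inv := fromBlocks 1 (-S) 0 1
  val_inv := by simp [fromBlocks_multiply, fromBlocks_one]
  inv_val := by simp [fromBlocks_multiply, fromBlocks_one]

def weylElement (i : l) : GL (l ⊕ l) R where
  val := fromBlocks (1 - single i i 1) (-single i i 1) (single i i 1) (1 - single i i 1)
  inv := fromBlocks (1 - single i i 1) (single i i 1) (-single i i 1) (1 - single i i 1)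
  val_inv := by simp [fromBlocks_multiply, fromBlocks_one, mul_sub, sub_mul]
  inv_val := by simp [fromBlocks_multiply, fromBlocks_one, mul_sub, sub_mul]

theorem siegelLevi_mem (Y : GL l R) : siegelLevi Y ∈ siegelParabolic l R :=
  ⟨SymplecticGroup.fromBlocks_mem_iff.2 ⟨by simp, by simp, by simp [← transpose_mul]⟩, rfl⟩

theorem siegelUnipotent_mem {S : Matrix l l R} (hS : Sᵀ = S) :
    siegelUnipotent S ∈ siegelParabolic l R :=
  ⟨SymplecticGroup.fromBlocks_mem_iff.2 ⟨by simp, by simp [hS], by simp⟩, rfl⟩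

theorem weylElement_mem_symplecticGroup (i : l) :
    ((weylElement i : GL (l ⊕ l) R) : Matrix (l ⊕ l) (l ⊕ l) R) ∈ symplecticGroup l R :=
  SymplecticGroup.fromBlocks_mem_iff.2 ⟨by simp [mul_sub, sub_mul], by simp [mul_sub, sub_mul],
    by simp [mul_sub, sub_mul]⟩

theorem isUnit_det_toBlocks_of_toBlocks₂₁_eq_zero {p : GL (l ⊕ l) R}
    (hp : (p : Matrix (l ⊕ l) (l ⊕ l) R).toBlocks₂₁ = 0) :
    IsUnit (p : Matrix (l ⊕ l) (l ⊕ l) R).toBlocks₁₁.det ∧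
      IsUnit (p : Matrix (l ⊕ l) (l ⊕ l) R).toBlocks₂₂.det := by
  have hdet := (p : Matrix (l ⊕ l) (l ⊕ l) R).isUnit_iff_isUnit_det.1 p.isUnit
  rw [← fromBlocks_toBlocks (p : Matrix (l ⊕ l) (l ⊕ l) R), hp, det_fromBlocks_zero₂₁] at hdet
  exact ⟨isUnit_of_mul_isUnit_left hdet, isUnit_of_mul_isUnit_right hdet⟩

theorem toBlocks₂₁_mul_mul_of_mem_siegelParabolic {p q : GL (l ⊕ l) R}
    (hp : p ∈ siegelParabolic l R) (hq : q ∈ siegelParabolic l R) (g : Matrix (l ⊕ l) (l ⊕ l) R) :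
    ((p : Matrix (l ⊕ l) (l ⊕ l) R) * g * q).toBlocks₂₁ =
      (p : Matrix (l ⊕ l) (l ⊕ l) R).toBlocks₂₂ * g.toBlocks₂₁ *
        (q : Matrix (l ⊕ l) (l ⊕ l) R).toBlocks₁₁ := by
  simp [toBlocks₂₁_mul, hp.2, hq.2, Matrix.mul_assoc]

theorem rank_toBlocks₂₁_mul_mul_of_mem_siegelParabolic {p q : GL (l ⊕ l) K}
    (hp : p ∈ siegelParabolic l K) (hq : q ∈ siegelParabolic l K) (g : Matrix (l ⊕ l) (l ⊕ l) K) :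
    ((p : Matrix (l ⊕ l) (l ⊕ l) K) * g * q).toBlocks₂₁.rank = g.toBlocks₂₁.rank := by
  rw [toBlocks₂₁_mul_mul_of_mem_siegelParabolic hp hq,
    rank_mul_eq_left_of_isUnit_det _ _ (isUnit_det_toBlocks_of_toBlocks₂₁_eq_zero hq.2).1,
    rank_mul_eq_right_of_isUnit_det _ _ (isUnit_det_toBlocks_of_toBlocks₂₁_eq_zero hp.2).2]

theorem rank_toBlocks₂₁_weylElement_mul_lt {i : l} {g : Matrix (l ⊕ l) (l ⊕ l) K}
    (hg : g ∈ symplecticGroup l K) (hC : g.toBlocks₂₁ *ᵥ Pi.single i 1 = Pi.single i 1)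
    (hA : g.toBlocks₁₁ i i = 0) :
    (((weylElement i : GL (l ⊕ l) K) : Matrix (l ⊕ l) (l ⊕ l) K) * g).toBlocks₂₁.rank <
      g.toBlocks₂₁.rank := by
  obtain ⟨A, B, C, D, rfl⟩ : ∃ A B C D, g = fromBlocks A B C D :=
    ⟨_, _, _, _, (fromBlocks_toBlocks g).symm⟩
  rw [toBlocks_fromBlocks₂₁] at hC ⊢
  rw [toBlocks_fromBlocks₁₁] at hA
  set e : Matrix l l K := single i i 1
  have hCe : C * e = e := by
    ext a b
    by_cases hb : b = i
    · subst hb; simpa [e, single_apply, Pi.single_apply, eq_comm] using congrFun hC a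
    · simp [e, Ne.symm hb, mul_apply]
  have hrow : e * A = e * Aᵀ * C := calc
    e * A = (C * e)ᵀ * A := by rw [hCe, transpose_single]
    _ = e * (Cᵀ * A) := by rw [transpose_mul, transpose_single, Matrix.mul_assoc]
    _ = e * Aᵀ * C := by rw [← (SymplecticGroup.fromBlocks_mem_iff.1 hg).1, Matrix.mul_assoc]
  have hblock : (((weylElement i : GL (l ⊕ l) K) : Matrix (l ⊕ l) (l ⊕ l) K) *
      fromBlocks A B C D).toBlocks₂₁ = (e * Aᵀ + (1 - e)) * C := by
    simp only [weylElement, fromBlocks_multiply, toBlocks_fromBlocks₂₁]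
    rw [hrow, add_mul]
  have hMe : (e * Aᵀ + (1 - e)) * e = 0 := by
    simp [e, add_mul, sub_mul, hA]
  rw [hblock]
  refine rank_mul_lt_of_mulVec_eq_zero (v := Pi.single i 1) (by simp [hC]) ?_
  have he : e *ᵥ Pi.single i 1 = Pi.single i 1 := by
    rw [single_mulVec, Pi.single_eq_same, one_mul]; rfl
  rw [hC, ← he, mulVec_mulVec, hMe, zero_mulVec]

theorem exists_mem_siegelParabolic_normalForm (i : l) {g : Matrix (l ⊕ l) (l ⊕ l) K}
    (hC : g.toBlocks₂₁ ≠ 0) :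
    ∃ p ∈ siegelParabolic l K, ∃ q ∈ siegelParabolic l K,
      ((p : Matrix (l ⊕ l) (l ⊕ l) K) * g * q).toBlocks₂₁ *ᵥ Pi.single i 1 = Pi.single i 1 ∧
      ((p : Matrix (l ⊕ l) (l ⊕ l) K) * g * q).toBlocks₁₁ i i = 0 := by
  obtain ⟨Y, Z, hYZ⟩ := exists_transpose_inv_mul_mul_mulVec_single_eq hC i
  set g₁ := (siegelLevi Y : Matrix (l ⊕ l) (l ⊕ l) K) * g * (siegelLevi Z : GL (l ⊕ l) K)
  have hC₁ : g₁.toBlocks₂₁ *ᵥ Pi.single i 1 = Pi.single i 1 := by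
    rwa [toBlocks₂₁_mul_mul_of_mem_siegelParabolic (siegelLevi_mem Y) (siegelLevi_mem Z)]
  have hC₁ii : g₁.toBlocks₂₁ i i = 1 := by
    simpa [mulVec_single_one] using congrFun hC₁ i
  set u := siegelUnipotent (single i i (-g₁.toBlocks₁₁ i i) : Matrix l l K)
  have hu : u ∈ siegelParabolic l K := siegelUnipotent_mem (by simp)
  refine ⟨u * siegelLevi Y, mul_mem hu (siegelLevi_mem Y), siegelLevi Z, siegelLevi_mem Z, ?_⟩
  have hg : ((u * siegelLevi Y : GL (l ⊕ l) K) : Matrix (l ⊕ l) (l ⊕ l) K) * g *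
      (siegelLevi Z : GL (l ⊕ l) K) = (u : Matrix (l ⊕ l) (l ⊕ l) K) * g₁ := by
    simp only [g₁, Units.val_mul, Matrix.mul_assoc]
  rw [hg]
  constructor
  · simpa [toBlocks₂₁_mul, hu.2, u, siegelUnipotent] using hC₁
  · simp [toBlocks₁₁_mul, u, siegelUnipotent, hC₁ii]

theorem mem_closure_siegelParabolic_union_weylElement (i : l) {g : GL (l ⊕ l) K}
    (hg : (g : Matrix (l ⊕ l) (l ⊕ l) K) ∈ symplecticGroup l K) :
    g ∈ Subgroup.closure ((siegelParabolic l K : Set (GL (l ⊕ l) K)) ∪ {weylElement i}) := by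
  induction hn : (g : Matrix (l ⊕ l) (l ⊕ l) K).toBlocks₂₁.rank using Nat.strong_induction_on
    generalizing g with
  | _ n ih =>
  by_cases hC : (g : Matrix (l ⊕ l) (l ⊕ l) K).toBlocks₂₁ = 0
  · exact Subgroup.subset_closure (Or.inl ⟨hg, hC⟩)
  obtain ⟨p, hp, q, hq, hcol, hA⟩ := exists_mem_siegelParabolic_normalForm i hC
  have hlt : ((weylElement i * (p * g * q) : GL (l ⊕ l) K) :
      Matrix (l ⊕ l) (l ⊕ l) K).toBlocks₂₁.rank < n :=
    calc _ < ((p : Matrix (l ⊕ l) (l ⊕ l) K) * g * q).toBlocks₂₁.rank := by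
          rw [Units.val_mul, Units.val_mul, Units.val_mul]
          exact rank_toBlocks₂₁_weylElement_mul_lt (mul_mem (mul_mem hp.1 hg) hq.1) hcol hA
      _ = n := by rw [rank_toBlocks₂₁_mul_mul_of_mem_siegelParabolic hp hq, hn]
  have hmem := ih _ hlt (by
    simpa only [Units.val_mul] using
      mul_mem (weylElement_mem_symplecticGroup i) (mul_mem (mul_mem hp.1 hg) hq.1)) rfl
  set H := Subgroup.closure ((siegelParabolic l K : Set (GL (l ⊕ l) K)) ∪ {weylElement i})
  have hP : ∀ x ∈ siegelParabolic l K, x ∈ H := fun x hx => Subgroup.subset_closure (Or.inl hx)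
  have hw : weylElement i ∈ H := Subgroup.subset_closure (Or.inr rfl)
  rw [show g = p⁻¹ * ((weylElement i)⁻¹ * (weylElement i * (p * g * q))) * q⁻¹ by group]
  exact mul_mem (mul_mem (inv_mem (hP p hp)) (mul_mem (inv_mem hw) hmem)) (inv_mem (hP q hq))

end Matrix

theorem symplectic_generated_by_parabolic_and_w1
    (F : Type*) [Field F] (r : ℕ) [NeZero r] :
    ∀ (J : Matrix (Fin r ⊕ Fin r) (Fin r ⊕ Fin r) F),
    J = Matrix.fromBlocks 0 (-1) 1 0 →
    ∀ (w₁ : Matrix (Fin r ⊕ Fin r) (Fin r ⊕ Fin r) F),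
    (w₁ = fun p q =>
      match p, q with
      | Sum.inl i, Sum.inl j => if i = 0 then 0 else if i = j then 1 else 0
      | Sum.inl i, Sum.inr j => if i = 0 ∧ j = 0 then -1 else 0
      | Sum.inr i, Sum.inl j => if i = 0 ∧ j = 0 then 1 else 0
      | Sum.inr i, Sum.inr j => if i = 0 then 0 else if i = j then 1 else 0) →
    ∀ g : (Matrix (Fin r ⊕ Fin r) (Fin r ⊕ Fin r) F)ˣ,
      (g : Matrix (Fin r ⊕ Fin r) (Fin r ⊕ Fin r) F)ᵀ * J * g = J →
      g ∈ Subgroup.closure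
        ({p : (Matrix (Fin r ⊕ Fin r) (Fin r ⊕ Fin r) F)ˣ |
            (p : Matrix (Fin r ⊕ Fin r) (Fin r ⊕ Fin r) F)ᵀ * J * p = J ∧
            ∀ i j, (p : Matrix (Fin r ⊕ Fin r) (Fin r ⊕ Fin r) F) (Sum.inr i) (Sum.inl j) = 0} ∪
          {p : (Matrix (Fin r ⊕ Fin r) (Fin r ⊕ Fin r) F)ˣ |
            (p : Matrix (Fin r ⊕ Fin r) (Fin r ⊕ Fin r) F) = w₁}) := by
  rintro J rfl w₁ rfl g hg
  refine Subgroup.closure_mono ?_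
    (mem_closure_siegelParabolic_union_weylElement 0 (SymplecticGroup.mem_iff'.2 hg))
  rintro p (hp | rfl)
  · exact Or.inl ⟨SymplecticGroup.mem_iff'.1 hp.1, fun i j => congrFun (congrFun hp.2 i) j⟩
  · right
    ext (i | i) (j | j) <;>
      simp [weylElement, one_apply, single_apply] <;> grind
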